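/- arXiv:2501.16290 — 3 statements merged into one kernel-verified Lean document; each statement's English description precedes it below -/
import Mathlib

section
/- Let 0 < ρ₀, ρ₁ ≤ 1 with ρ₀ + ρ₁ = 1. Let z₀, z₁ be complex numbers with |z₀| = ρ₀ and |z₁ - 1| = ρ₁. Then |z₀ - z₁| ≥ |z₀ - ρ₀|² / (2ρ₀). -/
/-- Let `0 < ρ₀, ρ₁ ≤ 1` with `ρ₀ + ρ₁ = 1`. Let `z₀, z₁` be complex numbers with
`|z₀| = ρ₀` and `|z₁ - 1| = ρ₁`. Then `|z₀ - z₁| ≥ |z₀ - ρ₀|² / (2ρ₀)`. -/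
theorem abs_sub_ge_of_tangent_circles (ρ₀ ρ₁ : ℝ) (h₀ : 0 < ρ₀) (h₀' : ρ₀ ≤ 1)
    (h₁ : 0 < ρ₁) (h₁' : ρ₁ ≤ 1) (hsum : ρ₀ + ρ₁ = 1) (z₀ z₁ : ℂ)
    (hz₀ : ‖z₀‖ = ρ₀) (hz₁ : ‖z₁ - 1‖ = ρ₁) :
    ‖z₀ - (ρ₀ : ℂ)‖ ^ 2 / (2 * ρ₀) ≤ ‖z₀ - z₁‖ := by
  have hA : ‖z₀‖ ^ 2 = z₀.re ^ 2 + z₀.im ^ 2 := by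
    rw [Complex.sq_norm, Complex.normSq_apply]; ring
  have hsq : z₀.re ^ 2 + z₀.im ^ 2 = ρ₀ ^ 2 := by rw [← hA, hz₀]
  have hre : z₀.re ≤ ρ₀ := hz₀ ▸ Complex.re_le_norm z₀
  have h1 : ‖z₀ - ρ₀‖ ^ 2 = 2 * ρ₀ * (ρ₀ - z₀.re) := by
    rw [Complex.sq_norm, Complex.normSq_apply]
    simp only [Complex.sub_re, Complex.sub_im, Complex.ofReal_re, Complex.ofReal_im]
    nlinarith [hsq]
  have h2 : ‖z₀ - 1‖ ^ 2 = ρ₀ ^ 2 - 2 * z₀.re + 1 := by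
    rw [Complex.sq_norm, Complex.normSq_apply]
    simp only [Complex.sub_re, Complex.sub_im, Complex.one_re, Complex.one_im]
    nlinarith [hsq]
  have h3 : 1 - z₀.re ≤ ‖z₀ - 1‖ := by
    nlinarith [norm_nonneg (z₀ - 1), h2, sq_nonneg z₀.im, hsq,
      sq_nonneg (‖z₀ - 1‖ + (1 - z₀.re))]
  have tri : ‖z₀ - 1‖ - ρ₁ ≤ ‖z₀ - z₁‖ := by
    have := norm_sub_norm_le (z₀ - 1) (z₁ - 1)
    simp only [hz₁, sub_sub_sub_cancel_right] at this
    linarith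
  rw [div_le_iff₀ (by positivity), h1]
  nlinarith [tri, h3]
end

section
/- Let K be a number field of degree d over ℚ and let x be a nonzero element of K. Then for every normalized absolute value v of K with local degree d_v, one has e^{-d·h(x)} ≤ |x|_v^{d_v} ≤ e^{d·h(x)} (Liouville's inequality). -/
open NumberField IsDedekindDomain
open scoped Classical

/-- The order (additive valuation) of `x ∈ K` at a finite place `v`. -/
noncomputable def ordAt {K : Type*} [Field K] [NumberField K]
    (v : HeightOneSpectrum (𝓞 K)) (x : K) : ℤ :=
  if hx : x = 0 then 0
  else - Multiplicative.toAdd (WithZero.unzero ((v.valuation (K := K)).ne_zero_iff.mpr hx))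

/-- The residue characteristic of the finite place `v`, i.e. the underlying rational
prime `p`. -/
noncomputable def resChar {K : Type*} [Field K] [NumberField K]
    (v : HeightOneSpectrum (𝓞 K)) : ℕ := ringChar ((𝓞 K) ⧸ v.asIdeal)

/-- The ramification index `e` of the finite place `v` over its residue characteristic. -/
noncomputable def ramIdx {K : Type*} [Field K] [NumberField K]
    (v : HeightOneSpectrum (𝓞 K)) : ℕ :=
  Ideal.ramificationIdx' (Ideal.span {(resChar v : ℤ)}) v.asIdeal

/-- The inertia degree `f` of the finite place `v` over its residue characteristic. -/
noncomputable def inertia {K : Type*} [Field K] [NumberField K]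
    (v : HeightOneSpectrum (𝓞 K)) : ℕ :=
  Ideal.inertiaDeg' (Ideal.span {(resChar v : ℤ)}) v.asIdeal

/-- The local degree `d_v = e_v · f_v` of the finite place `v`. -/
noncomputable def localDeg {K : Type*} [Field K] [NumberField K]
    (v : HeightOneSpectrum (𝓞 K)) : ℕ := ramIdx v * inertia v

/-- The normalized `v`-adic absolute value `|x|_v = p^{-ord_v(x)/e}`, extending the
standard `p`-adic absolute value of `ℚ`. -/
noncomputable def finAbs {K : Type*} [Field K] [NumberField K]
    (v : HeightOneSpectrum (𝓞 K)) (x : K) : ℝ :=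
  if x = 0 then 0 else (resChar v : ℝ) ^ (-(ordAt v x : ℝ) / (ramIdx v : ℝ))

/-- The absolute logarithmic Weil height of `x ∈ K`:
`h(x) = (1/d) Σ_{v ∈ M_K} d_v log max{1, |x|_v}`, the sum running over the (normalized)
finite and infinite places of `K`. -/
noncomputable def heightK {K : Type*} [Field K] [NumberField K] (x : K) : ℝ :=
  ((∑ᶠ v : HeightOneSpectrum (𝓞 K), (localDeg v : ℝ) * Real.log (max 1 (finAbs v x))) +
    ∑ w : InfinitePlace K, (w.mult : ℝ) * Real.log (max 1 (w x))) /
    (Module.finrank ℚ K : ℝ)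

section Aux
set_option synthInstance.maxHeartbeats 200000
variable {K : Type*} [Field K] [NumberField K] (v : HeightOneSpectrum (𝓞 K))

theorem asIdeal_isMaximal : v.asIdeal.IsMaximal := v.isPrime.isMaximal v.ne_bot

theorem resChar_charP : CharP ((𝓞 K) ⧸ v.asIdeal) (resChar v) := ringChar.charP _

theorem resChar_prime : (resChar v).Prime := by
  haveI := asIdeal_isMaximal v
  letI : Field ((𝓞 K) ⧸ v.asIdeal) := Ideal.Quotient.field v.asIdeal
  letI : Fintype ((𝓞 K) ⧸ v.asIdeal) :=
    @Fintype.ofFinite _ (Ideal.finiteQuotientOfFreeOfNeBot v.asIdeal v.ne_bot)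
  haveI := resChar_charP v
  exact CharP.char_is_prime ((𝓞 K) ⧸ v.asIdeal) (resChar v)

theorem mem_asIdeal_resChar : ((resChar v : ℤ) : 𝓞 K) ∈ v.asIdeal := by
  haveI := resChar_charP v
  rw [← Ideal.Quotient.eq_zero_iff_mem]
  push_cast
  exact CharP.cast_eq_zero _ _

theorem comap_eq : v.asIdeal.comap (algebraMap ℤ (𝓞 K)) = Ideal.span {(resChar v : ℤ)} := by
  have hp := resChar_prime v
  have hmax : (Ideal.span {(resChar v : ℤ)}).IsMaximal :=
    PrincipalIdealRing.isMaximal_of_irreducible (Nat.prime_iff_prime_int.mp hp).irreducible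
  refine (hmax.eq_of_le ?_ ?_).symm
  · exact fun h => Ideal.comap_ne_top (algebraMap ℤ (𝓞 K)) (asIdeal_isMaximal v).ne_top h
  · rw [Ideal.span_le, Set.singleton_subset_iff]
    exact mem_asIdeal_resChar v

end Aux

section Aux2
set_option synthInstance.maxHeartbeats 200000
variable {K : Type*} [Field K] [NumberField K] (v : HeightOneSpectrum (𝓞 K))

theorem span_resChar_isMaximal : (Ideal.span {(resChar v : ℤ)}).IsMaximal :=
  PrincipalIdealRing.isMaximal_of_irreducible
    (Nat.prime_iff_prime_int.mp (resChar_prime v)).irreducible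

theorem liesOver_resChar : v.asIdeal.LiesOver (Ideal.span {(resChar v : ℤ)}) :=
  ⟨(comap_eq v).symm⟩

theorem map_span_resChar :
    Ideal.map (algebraMap ℤ (𝓞 K)) (Ideal.span {(resChar v : ℤ)}) =
      Ideal.span {((resChar v : ℤ) : 𝓞 K)} := by
  rw [Ideal.map_span, Set.image_singleton]
  norm_num

theorem ramIdx_pos : 0 < ramIdx v := by
  refine Nat.pos_of_ne_zero ?_
  refine Ideal.IsDedekindDomain.ramificationIdx'_ne_zero ?_ v.isPrime ?_
  · rw [map_span_resChar, Ne, Ideal.span_singleton_eq_bot]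
    exact_mod_cast fun h => (resChar_prime v).ne_zero (by exact_mod_cast h)
  · rw [map_span_resChar, Ideal.span_le, Set.singleton_subset_iff]
    exact mem_asIdeal_resChar v

theorem inertia_pos : 0 < inertia v := by
  haveI := span_resChar_isMaximal v
  haveI := liesOver_resChar v
  exact Ideal.inertiaDeg'_pos (Ideal.span {(resChar v : ℤ)}) v.asIdeal

theorem absNorm_asIdeal : Ideal.absNorm v.asIdeal = resChar v ^ inertia v := by
  haveI := span_resChar_isMaximal v
  haveI := liesOver_resChar v
  haveI := asIdeal_isMaximal v
  letI : Field ((𝓞 K) ⧸ v.asIdeal) := Ideal.Quotient.field v.asIdeal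
  letI : Fintype ((𝓞 K) ⧸ v.asIdeal) :=
    @Fintype.ofFinite _ (Ideal.finiteQuotientOfFreeOfNeBot v.asIdeal v.ne_bot)
  letI : Field (ℤ ⧸ Ideal.span {(resChar v : ℤ)}) :=
    Ideal.Quotient.field _
  haveI : NeZero (resChar v) := ⟨(resChar_prime v).ne_zero⟩
  letI : Fintype (ℤ ⧸ Ideal.span {(resChar v : ℤ)}) :=
    Fintype.ofEquiv (ZMod (resChar v))
      (Int.quotientSpanNatEquivZMod (resChar v)).toEquiv.symm
  have hcard : Fintype.card (ℤ ⧸ Ideal.span {(resChar v : ℤ)}) = resChar v := by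
    rw [Fintype.card_congr (Int.quotientSpanNatEquivZMod (resChar v)).toEquiv]
    exact ZMod.card (resChar v)
  have key := @Module.card_eq_pow_finrank (ℤ ⧸ Ideal.span {(resChar v : ℤ)})
    ((𝓞 K) ⧸ v.asIdeal) _ _ _ _ _
  rw [hcard] at key
  rw [show inertia v = Ideal.inertiaDeg'
      (Ideal.span {(resChar v : ℤ)}) v.asIdeal from rfl,
    Ideal.inertiaDeg'_algebraMap]
  rw [Ideal.absNorm_apply, Submodule.cardQuot_apply, Nat.card_eq_fintype_card]
  exact key

end Aux2

section Aux3
set_option synthInstance.maxHeartbeats 400000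
variable {K : Type*} [Field K] [NumberField K] (v : HeightOneSpectrum (𝓞 K))

/-- abbreviation for the multiplicity of `v` in the factorization of `span {a}` -/
noncomputable def cntv (a : 𝓞 K) : ℕ :=
  (Associates.mk v.asIdeal).count (Associates.mk (Ideal.span {a})).factors

theorem valuation_eq_ofAdd_neg_ordAt {x : K} (hx : x ≠ 0) :
    v.valuation K x = ((Multiplicative.ofAdd (-ordAt v x)
      : Multiplicative ℤ) : WithZero (Multiplicative ℤ)) := by
  rw [ordAt, dif_neg hx, neg_neg, ofAdd_toAdd, WithZero.coe_unzero]

theorem ordAt_eq_sub {a b : 𝓞 K} (ha : a ≠ 0) (hb : b ≠ 0) {x : K}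
    (hxab : x = algebraMap (𝓞 K) K a / algebraMap (𝓞 K) K b) :
    ordAt v x = (cntv v a : ℤ) - (cntv v b : ℤ) := by
  have hx : x ≠ 0 := by
    rw [hxab]
    exact div_ne_zero ((map_ne_zero_iff _ (IsFractionRing.injective (𝓞 K) K)).mpr ha)
      ((map_ne_zero_iff _ (IsFractionRing.injective (𝓞 K) K)).mpr hb)
  have h1 : v.valuation K x = ((Multiplicative.ofAdd (-(cntv v a : ℤ) + (cntv v b : ℤ)) :
      Multiplicative ℤ) : WithZero (Multiplicative ℤ)) := by
    rw [hxab, map_div₀, v.valuation_of_algebraMap, v.valuation_of_algebraMap,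
      IsDedekindDomain.HeightOneSpectrum.intValuation_apply,
      IsDedekindDomain.HeightOneSpectrum.intValuation_apply,
      v.intValuationDef_if_neg ha, v.intValuationDef_if_neg hb]
    unfold WithZero.exp
    rw [← WithZero.coe_div, WithZero.coe_inj]
    rw [div_eq_mul_inv, ← ofAdd_neg, ← ofAdd_add, neg_neg]
    rfl
  rw [valuation_eq_ofAdd_neg_ordAt v hx, WithZero.coe_inj] at h1
  have := congrArg Multiplicative.toAdd h1
  simp only [toAdd_ofAdd] at this
  omega

end Aux3

section Aux4
set_option synthInstance.maxHeartbeats 400000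
variable {K : Type*} [Field K] [NumberField K] (v : HeightOneSpectrum (𝓞 K))

theorem resChar_pos : (0:ℝ) < (resChar v : ℝ) := by
  exact_mod_cast (resChar_prime v).pos

theorem finAbs_pos {x : K} (hx : x ≠ 0) : 0 < finAbs v x := by
  rw [finAbs, if_neg hx]
  exact Real.rpow_pos_of_pos (resChar_pos v) _

theorem log_absNorm : Real.log (Ideal.absNorm v.asIdeal : ℝ) =
    (inertia v : ℝ) * Real.log (resChar v : ℝ) := by
  rw [absNorm_asIdeal v]
  push_cast
  rw [Real.log_pow]

theorem finAbs_pow_eq {x : K} (hx : x ≠ 0) :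
    finAbs v x ^ localDeg v =
      Real.exp (-(ordAt v x : ℝ) * Real.log (Ideal.absNorm v.asIdeal : ℝ)) := by
  have hp := resChar_pos v
  have he : (ramIdx v : ℝ) ≠ 0 := by
    exact_mod_cast (ramIdx_pos v).ne'
  rw [finAbs, if_neg hx, ← Real.rpow_natCast (_ ^ _) (localDeg v), ← Real.rpow_mul hp.le]
  rw [Real.rpow_def_of_pos hp, log_absNorm]
  congr 1
  have : ((localDeg v : ℕ) : ℝ) = (ramIdx v : ℝ) * (inertia v : ℝ) := by
    rw [localDeg]; push_cast; ring
  rw [this]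
  field_simp

theorem log_finAbs_pow {x : K} (hx : x ≠ 0) :
    Real.log (finAbs v x ^ localDeg v) =
      -(ordAt v x : ℝ) * Real.log (Ideal.absNorm v.asIdeal : ℝ) := by
  rw [finAbs_pow_eq v hx, Real.log_exp]

end Aux4

section Aux5
set_option synthInstance.maxHeartbeats 400000
variable {K : Type*} [Field K] [NumberField K] (v : HeightOneSpectrum (𝓞 K))

theorem absNorm_asIdeal_pos : (0:ℝ) < (Ideal.absNorm v.asIdeal : ℝ) := by
  rw [absNorm_asIdeal v]
  have h2 : (2:ℝ) ≤ (resChar v : ℝ) := by exact_mod_cast (resChar_prime v).two_le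
  push_cast
  exact pow_pos (by linarith) _

theorem span_ne_zero {a : 𝓞 K} (ha : a ≠ 0) : (Ideal.span {a} : Ideal (𝓞 K)) ≠ 0 := by
  rw [Ideal.zero_eq_bot, Ne, Ideal.span_singleton_eq_bot]
  exact ha

theorem cntv_finite {a : 𝓞 K} (ha : a ≠ 0) :
    {v : HeightOneSpectrum (𝓞 K) | cntv v a ≠ 0}.Finite := by
  refine (Ideal.finite_factors (span_ne_zero ha)).subset ?_
  intro v hv
  exact (Associates.count_ne_zero_iff_dvd (span_ne_zero ha) v.irreducible).mp hv

theorem sum_cnt_log {a : 𝓞 K} (ha : a ≠ 0) (S : Finset (HeightOneSpectrum (𝓞 K)))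
    (hS : ∀ v, cntv v a ≠ 0 → v ∈ S) :
    ∑ v ∈ S, (cntv v a : ℝ) * Real.log (Ideal.absNorm v.asIdeal : ℝ) =
      Real.log (Ideal.absNorm (Ideal.span {a} : Ideal (𝓞 K)) : ℝ) := by
  have hfact := Ideal.finprod_heightOneSpectrum_factorization (span_ne_zero ha)
  rw [finprod_eq_prod_of_mulSupport_subset _ (s := S) ?hsub] at hfact
  case hsub =>
    intro v hv
    simp only [Function.mem_mulSupport, IsDedekindDomain.HeightOneSpectrum.maxPowDividing] at hv
    refine hS v fun h => hv ?_
    rw [show (Associates.mk v.asIdeal).count (Associates.mk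
        (Ideal.span {a} : Ideal (𝓞 K))).factors = cntv v a from rfl, h, pow_zero]
  have h2 : Ideal.absNorm (Ideal.span {a} : Ideal (𝓞 K)) =
      ∏ v ∈ S, Ideal.absNorm v.asIdeal ^ cntv v a := by
    rw [← hfact, map_prod]
    exact Finset.prod_congr rfl fun w _ => by
      rw [IsDedekindDomain.HeightOneSpectrum.maxPowDividing, map_pow]; rfl
  rw [h2]
  push_cast
  rw [Real.log_prod]
  · refine Finset.sum_congr rfl fun v _ => ?_
    rw [Real.log_pow]
  · intro v _
    exact (pow_pos (absNorm_asIdeal_pos v) _).ne'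

end Aux5

section Aux6
set_option synthInstance.maxHeartbeats 400000
variable {K : Type*} [Field K] [NumberField K]

theorem abs_norm_eq_absNorm (a : 𝓞 K) :
    |(Algebra.norm ℚ (algebraMap (𝓞 K) K a) : ℝ)| =
      (Ideal.absNorm (Ideal.span {a} : Ideal (𝓞 K)) : ℝ) := by
  rw [Ideal.absNorm_span_singleton, ← NumberField.RingOfIntegers.coe_eq_algebraMap,
    ← Algebra.coe_norm_int]
  push_cast
  rw [Nat.cast_natAbs]
  push_cast
  rfl

theorem sum_inf_log {x : K} (hx : x ≠ 0) :
    ∑ w : InfinitePlace K, (w.mult : ℝ) * Real.log (w x) =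
      Real.log |(Algebra.norm ℚ x : ℝ)| := by
  have h := NumberField.InfinitePlace.prod_eq_abs_norm x
  have h2 : Real.log (∏ w : InfinitePlace K, w x ^ w.mult) =
      ∑ w : InfinitePlace K, (w.mult : ℝ) * Real.log (w x) := by
    rw [Real.log_prod]
    · exact Finset.sum_congr rfl fun w _ => Real.log_pow _ _
    · intro w _
      exact (pow_pos ((NumberField.InfinitePlace.pos_iff (w := w)).mpr hx) _).ne'
  rw [← h2, h]
  push_cast
  rfl

end Aux6

theorem sandwich {ι : Type*} (A : Finset ι) (T M : ι → ℝ)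
    (hTM : ∀ i, T i ≤ M i) (hM0 : ∀ i, 0 ≤ M i)
    (hout : ∀ i ∉ A, T i = 0) (hT : ∑ i ∈ A, T i = 0) (i0 : ι) :
    -∑ i ∈ A, M i ≤ T i0 ∧ T i0 ≤ ∑ i ∈ A, M i := by
  classical
  have hMsum : 0 ≤ ∑ i ∈ A, M i := Finset.sum_nonneg fun i _ => hM0 i
  by_cases hi : i0 ∈ A
  · constructor
    · have h1 : T i0 + ∑ i ∈ A.erase i0, T i = 0 := by
        rw [Finset.add_sum_erase A T hi]; exact hT
      have h2 : ∑ i ∈ A.erase i0, T i ≤ ∑ i ∈ A, M i :=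
        le_trans (Finset.sum_le_sum fun i _ => hTM i)
          (Finset.sum_le_sum_of_subset_of_nonneg (Finset.erase_subset _ _)
            (fun i _ _ => hM0 i))
      linarith
    · exact le_trans (hTM i0) (Finset.single_le_sum (fun i _ => hM0 i) hi)
  · rw [hout i0 hi]
    exact ⟨by linarith, hMsum⟩

section Aux7
set_option synthInstance.maxHeartbeats 400000
variable {K : Type*} [Field K] [NumberField K] (v : HeightOneSpectrum (𝓞 K))

theorem finAbs_eq_one {x : K} (hx : x ≠ 0) (h : ordAt v x = 0) : finAbs v x = 1 := by
  rw [finAbs, if_neg hx, h]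
  norm_num
end Aux7

set_option maxHeartbeats 1000000 in
set_option synthInstance.maxHeartbeats 400000 in
/-- **Liouville's inequality.** Let `K` be a number field of degree `d` and `x ∈ K^×`.
Then for every normalized absolute value `v` of `K` (finite or infinite) with local
degree `d_v` one has `e^{-d·h(x)} ≤ |x|_v^{d_v} ≤ e^{d·h(x)}`. -/
theorem liouville_inequality (K : Type*) [Field K] [NumberField K] (x : K) (hx : x ≠ 0) :
    (∀ v : HeightOneSpectrum (𝓞 K),
        Real.exp (-(Module.finrank ℚ K : ℝ) * heightK x) ≤ finAbs v x ^ localDeg v ∧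
        finAbs v x ^ localDeg v ≤ Real.exp ((Module.finrank ℚ K : ℝ) * heightK x)) ∧
      ∀ w : InfinitePlace K,
        Real.exp (-(Module.finrank ℚ K : ℝ) * heightK x) ≤ w x ^ w.mult ∧
        w x ^ w.mult ≤ Real.exp ((Module.finrank ℚ K : ℝ) * heightK x) := by
    classical
  obtain ⟨a, b, hbmem, hxab⟩ := IsFractionRing.div_surjective (A := 𝓞 K) x
  have hb0 : b ≠ 0 := nonZeroDivisors.ne_zero hbmem
  have ha0 : a ≠ 0 := by
    intro h
    apply hx
    rw [← hxab, h, map_zero, zero_div]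
  have hxab' : x = algebraMap (𝓞 K) K a / algebraMap (𝓞 K) K b := hxab.symm
  set S : Finset (HeightOneSpectrum (𝓞 K)) :=
    ((cntv_finite ha0).union (cntv_finite hb0)).toFinset with hS
  have hmemS : ∀ v : HeightOneSpectrum (𝓞 K), cntv v a ≠ 0 ∨ cntv v b ≠ 0 → v ∈ S := by
    intro v hv
    rw [hS, Set.Finite.mem_toFinset]
    exact hv
  have hordS : ∀ v ∉ S, ordAt v x = 0 := by
    intro v hv
    rw [ordAt_eq_sub v ha0 hb0 hxab']
    have h1 : cntv v a = 0 := by by_contra h; exact hv (hmemS v (Or.inl h))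
    have h2 : cntv v b = 0 := by by_contra h; exact hv (hmemS v (Or.inr h))
    rw [h1, h2]
    ring
  set T : HeightOneSpectrum (𝓞 K) ⊕ InfinitePlace K → ℝ :=
    Sum.elim (fun v => Real.log (finAbs v x ^ localDeg v))
      (fun w => Real.log (w x ^ w.mult)) with hT
  set M : HeightOneSpectrum (𝓞 K) ⊕ InfinitePlace K → ℝ :=
    Sum.elim (fun v => (localDeg v : ℝ) * Real.log (max 1 (finAbs v x)))
      (fun w => (w.mult : ℝ) * Real.log (max 1 (w x))) with hM
  set A := S.disjSum (Finset.univ : Finset (InfinitePlace K)) with hA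
  have hwpos : ∀ w : InfinitePlace K, 0 < w x := fun w =>
    (NumberField.InfinitePlace.pos_iff (w := w)).mpr hx
  have hTM : ∀ i, T i ≤ M i := by
    rintro (v | w)
    · simp only [hT, hM, Sum.elim_inl]
      rw [Real.log_pow]
      exact mul_le_mul_of_nonneg_left
        (Real.log_le_log (finAbs_pos v hx) (le_max_right _ _)) (Nat.cast_nonneg _)
    · simp only [hT, hM, Sum.elim_inr]
      rw [Real.log_pow]
      exact mul_le_mul_of_nonneg_left
        (Real.log_le_log (hwpos w) (le_max_right _ _)) (Nat.cast_nonneg _)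
  have hM0 : ∀ i, 0 ≤ M i := by
    rintro (v | w) <;> simp only [hM, Sum.elim_inl, Sum.elim_inr] <;>
      exact mul_nonneg (Nat.cast_nonneg _) (Real.log_nonneg (le_max_left _ _))
  have hout : ∀ i ∉ A, T i = 0 := by
    rintro (v | w) hi
    · have hv : v ∉ S := fun h => hi (Finset.inl_mem_disjSum.mpr h)
      simp only [hT, Sum.elim_inl]
      rw [finAbs_eq_one v hx (hordS v hv), one_pow, Real.log_one]
    · exact absurd (Finset.inr_mem_disjSum.mpr (Finset.mem_univ w)) hi
  have hNa : (0:ℝ) < (Ideal.absNorm (Ideal.span {a} : Ideal (𝓞 K)) : ℝ) := by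
    rw [← abs_norm_eq_absNorm a]
    refine abs_pos.mpr ?_
    have : Algebra.norm ℚ (algebraMap (𝓞 K) K a) ≠ 0 := by
      rw [Algebra.norm_ne_zero_iff]
      exact (map_ne_zero_iff _ (IsFractionRing.injective (𝓞 K) K)).mpr ha0
    exact_mod_cast this
  have hNb : (0:ℝ) < (Ideal.absNorm (Ideal.span {b} : Ideal (𝓞 K)) : ℝ) := by
    rw [← abs_norm_eq_absNorm b]
    refine abs_pos.mpr ?_
    have : Algebra.norm ℚ (algebraMap (𝓞 K) K b) ≠ 0 := by
      rw [Algebra.norm_ne_zero_iff]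
      exact (map_ne_zero_iff _ (IsFractionRing.injective (𝓞 K) K)).mpr hb0
    exact_mod_cast this
  have hsum0 : ∑ i ∈ A, T i = 0 := by
    rw [hA, Finset.sum_disjSum]
    have hfin : ∑ v ∈ S, T (Sum.inl v) =
        Real.log (Ideal.absNorm (Ideal.span {b} : Ideal (𝓞 K)) : ℝ) -
          Real.log (Ideal.absNorm (Ideal.span {a} : Ideal (𝓞 K)) : ℝ) := by
      have hterm : ∀ v ∈ S, T (Sum.inl v) =
          (cntv v b : ℝ) * Real.log (Ideal.absNorm v.asIdeal : ℝ) -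
            (cntv v a : ℝ) * Real.log (Ideal.absNorm v.asIdeal : ℝ) := by
        intro v _
        simp only [hT, Sum.elim_inl]
        rw [log_finAbs_pow v hx, ordAt_eq_sub v ha0 hb0 hxab']
        push_cast
        ring
      rw [Finset.sum_congr rfl hterm, Finset.sum_sub_distrib,
        sum_cnt_log hb0 S (fun v h => hmemS v (Or.inr h)),
        sum_cnt_log ha0 S (fun v h => hmemS v (Or.inl h))]
    have hinf : ∑ w : InfinitePlace K, T (Sum.inr w) =
        Real.log (Ideal.absNorm (Ideal.span {a} : Ideal (𝓞 K)) : ℝ) -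
          Real.log (Ideal.absNorm (Ideal.span {b} : Ideal (𝓞 K)) : ℝ) := by
      have h1 : ∑ w : InfinitePlace K, T (Sum.inr w) =
          ∑ w : InfinitePlace K, (w.mult : ℝ) * Real.log (w x) := by
        refine Finset.sum_congr rfl fun w _ => ?_
        simp only [hT, Sum.elim_inr]
        rw [Real.log_pow]
      rw [h1, sum_inf_log hx]
      have hb' : algebraMap (𝓞 K) K b ≠ 0 :=
        (map_ne_zero_iff _ (IsFractionRing.injective (𝓞 K) K)).mpr hb0
      have hmul : Algebra.norm ℚ x * Algebra.norm ℚ (algebraMap (𝓞 K) K b) =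
          Algebra.norm ℚ (algebraMap (𝓞 K) K a) := by
        rw [← map_mul]
        congr 1
        rw [hxab']
        field_simp
      have habs : |(Algebra.norm ℚ x : ℝ)| * (Ideal.absNorm (Ideal.span {b} : Ideal (𝓞 K)) : ℝ) =
          (Ideal.absNorm (Ideal.span {a} : Ideal (𝓞 K)) : ℝ) := by
        rw [← abs_norm_eq_absNorm a, ← abs_norm_eq_absNorm b, ← abs_mul]
        congr 1
        push_cast [← hmul]
        ring
      have hdiv : |(Algebra.norm ℚ x : ℝ)| =
          (Ideal.absNorm (Ideal.span {a} : Ideal (𝓞 K)) : ℝ) /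
            (Ideal.absNorm (Ideal.span {b} : Ideal (𝓞 K)) : ℝ) := by
        rw [eq_div_iff hNb.ne']
        exact habs
      rw [hdiv, Real.log_div hNa.ne' hNb.ne']
    rw [hfin, hinf]
    ring
  have hdpos : (0:ℝ) < (Module.finrank ℚ K : ℝ) := by
    exact_mod_cast Module.finrank_pos
  have hheight : (Module.finrank ℚ K : ℝ) * heightK x = ∑ i ∈ A, M i := by
    have hsupp : (Function.support fun v : HeightOneSpectrum (𝓞 K) =>
        (localDeg v : ℝ) * Real.log (max 1 (finAbs v x))) ⊆ ↑S := by
      intro v hv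
      simp only [Function.mem_support] at hv
      by_contra hvS
      apply hv
      rw [finAbs_eq_one v hx (hordS v hvS)]
      norm_num
    rw [heightK, finsum_eq_sum_of_support_subset _ hsupp, hA, Finset.sum_disjSum,
      mul_comm, div_mul_cancel₀ _ hdpos.ne']
    simp only [hM, Sum.elim_inl, Sum.elim_inr]
  have key := sandwich A T M hTM hM0 hout hsum0
  constructor
  · intro v
    have h := key (Sum.inl v)
    have hpos : 0 < finAbs v x ^ localDeg v := pow_pos (finAbs_pos v hx) _
    have hTv : T (Sum.inl v) = Real.log (finAbs v x ^ localDeg v) := rfl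
    constructor
    · calc Real.exp (-(Module.finrank ℚ K : ℝ) * heightK x)
          = Real.exp (-(∑ i ∈ A, M i)) := by rw [neg_mul, hheight]
        _ ≤ Real.exp (T (Sum.inl v)) := Real.exp_le_exp.mpr h.1
        _ = finAbs v x ^ localDeg v := by rw [hTv, Real.exp_log hpos]
    · calc finAbs v x ^ localDeg v
          = Real.exp (T (Sum.inl v)) := by rw [hTv, Real.exp_log hpos]
        _ ≤ Real.exp (∑ i ∈ A, M i) := Real.exp_le_exp.mpr h.2
        _ = Real.exp ((Module.finrank ℚ K : ℝ) * heightK x) := by rw [hheight]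
  · intro w
    have h := key (Sum.inr w)
    have hpos : 0 < w x ^ w.mult := pow_pos (hwpos w) _
    have hTw : T (Sum.inr w) = Real.log (w x ^ w.mult) := rfl
    constructor
    · calc Real.exp (-(Module.finrank ℚ K : ℝ) * heightK x)
          = Real.exp (-(∑ i ∈ A, M i)) := by rw [neg_mul, hheight]
        _ ≤ Real.exp (T (Sum.inr w)) := Real.exp_le_exp.mpr h.1
        _ = w x ^ w.mult := by rw [hTw, Real.exp_log hpos]
    · calc w x ^ w.mult
          = Real.exp (T (Sum.inr w)) := by rw [hTw, Real.exp_log hpos]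
        _ ≤ Real.exp (∑ i ∈ A, M i) := Real.exp_le_exp.mpr h.2
        _ = Real.exp ((Module.finrank ℚ K : ℝ) * heightK x) := by rw [hheight]
end

section
/- Let a, b, c, d be positive real numbers with the property: among a, b, c, d, three are equal and the fourth is ≤ the common value; the same property holds for a', b', c', d'; and aa' = bb' = cc' = dd'. Then a = b = c = d. -/
/-- A quadruple of reals has the property that three of its entries are equal and the
fourth is at most the common value. -/
def ThreeEqualFourthLe (q : Fin 4 → ℝ) : Prop :=
  ∃ j : Fin 4, (∀ k, k ≠ j → ∀ l, l ≠ j → q k = q l) ∧ ∀ k, k ≠ j → q j ≤ q k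

/-- Two quadruples of positive reals, each with three equal entries and the fourth entry
at most the common value, whose entrywise products are all equal, must each be constant. -/
theorem quadruples_constant (q q' : Fin 4 → ℝ) (hq : ∀ i, 0 < q i) (hq' : ∀ i, 0 < q' i)
    (h1 : ThreeEqualFourthLe q) (h2 : ThreeEqualFourthLe q')
    (hprod : ∀ i j, q i * q' i = q j * q' j) :
    ∀ i j, q i = q j ∧ q' i = q' j := by
  obtain ⟨j, hj1, hj2⟩ := h1
  obtain ⟨j', hj1', hj2'⟩ := h2
  have hex : ∀ a b : Fin 4, ∃ i : Fin 4, i ≠ a ∧ i ≠ b := by decide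
  obtain ⟨i0, hi0j, hi0j'⟩ := hex j j'
  have key : ∀ k, q k = q i0 ∧ q' k = q' i0 := by
    have hkey : ∀ k, q k = q i0 → q' k = q' i0 := by
      intro k hk
      have hp := hprod k i0
      rw [hk] at hp
      exact mul_left_cancel₀ (ne_of_gt (hq i0)) hp
    have hkey' : ∀ k, q' k = q' i0 → q k = q i0 := by
      intro k hk
      have hp := hprod k i0
      rw [hk] at hp
      exact mul_right_cancel₀ (ne_of_gt (hq' i0)) hp
    have hj_eq : q j = q i0 ∧ q' j = q' i0 := by
      by_cases hjj' : j = j'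
      · subst hjj'
        have h1 := hj2 i0 hi0j
        have h2 := hj2' i0 hi0j'
        have hp := hprod j i0
        have hA : q j = q i0 := by nlinarith [hq i0, hq' i0, hq j, hq' j]
        exact ⟨hA, hkey j hA⟩
      · have h2 : q' j = q' i0 := hj1' j hjj' i0 hi0j'
        exact ⟨hkey' j h2, h2⟩
    intro k
    by_cases hk : k = j
    · exact hk ▸ hj_eq
    · have h1 : q k = q i0 := hj1 k hk i0 hi0j
      exact ⟨h1, hkey k h1⟩
  intro i j
  obtain ⟨a1, a2⟩ := key i
  obtain ⟨b1, b2⟩ := key j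
  exact ⟨a1.trans b1.symm, a2.trans b2.symm⟩
end
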